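/- In the partially linear network model, assume additionally that ε^Y and ε^T are square-integrable (and A.mulVec ∘ ε^T square-integrable). Then the moment condition at the true parameters holds: E[⟨ε^Y, ε^T⟩] = 0 and E[⟨ε^Y, A.mulVec ∘ ε^T⟩] = 0; consequently E[ψ(θ₀, α₀, m₀, ℓ₀)] = (0, 0). -/

import Mathlib

open MeasureTheory ProbabilityTheory
open scoped RealInnerProductSpace ENNReal

/-- The action of the matrix `A` on vectors, `A.mulVec`, viewed as a map of
`EuclideanSpace ℝ (Fin n)` (it is definitionally `A.mulVec`). -/
noncomputable def mulVecE {n : ℕ} (A : Matrix (Fin n) (Fin n) ℝ)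
    (v : EuclideanSpace ℝ (Fin n)) : EuclideanSpace ℝ (Fin n) :=
  WithLp.toLp 2 (A.mulVec v)

/-!
Substituting the model, the residual `Y - ℓ₀ - θ₀ ε^T - α₀ A ε^T` is `ε^Y` almost surely:
conditioning on `𝒢` commutes with the linear map `θ₀ + α₀ A`, fixes `g`, and kills `ε^Y` by the
tower property. The score is therefore `(⟪ε^Y, ε^T⟫, ⟪ε^Y, A ε^T⟫)`. Both `ε^T` and `A ε^T` are
`ℋ`-measurable, so they pull out of `E[· ∣ ℋ]`, and `E[ε^Y ∣ ℋ] = 0` makes each component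
centred; square integrability (Cauchy–Schwarz) makes the inner products integrable.
-/

section

variable {Ω E F : Type*} {m m0 : MeasurableSpace Ω} {P : Measure Ω}
  [NormedAddCommGroup E] [InnerProductSpace ℝ E]

theorem MeasureTheory.MemLp.integrable_inner {f g : Ω → E} (hf : MemLp f 2 P)
    (hg : MemLp g 2 P) : Integrable (fun ω => ⟪f ω, g ω⟫) P := by
  refine memLp_one_iff_integrable.mp (hf.of_bilin (fun x y => ⟪x, y⟫) 1 hg ?_ ?_)
  · exact hf.1.inner hg.1
  · filter_upwards with ω
    simpa using nnnorm_inner_le_nnnorm (𝕜 := ℝ) (f ω) (g ω)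

theorem integral_inner_eq_zero_of_condExp_eq_zero [CompleteSpace E] (hm : m ≤ m0)
    [SigmaFinite (P.trim hm)] {f X : Ω → E} (hf : Integrable f P)
    (hf_cond : P[f|m] =ᵐ[P] 0) (hX : StronglyMeasurable[m] X)
    (hfX : Integrable (fun ω => ⟪f ω, X ω⟫) P) :
    ∫ ω, ⟪f ω, X ω⟫ ∂P = 0 := by
  have hpull : P[fun ω => ⟪f ω, X ω⟫|m] =ᵐ[P] fun ω => ⟪P[f|m] ω, X ω⟫ :=
    condExp_bilin_of_stronglyMeasurable_right (innerSL ℝ) hX hfX hf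
  calc ∫ ω, ⟪f ω, X ω⟫ ∂P = ∫ ω, P[fun ω => ⟪f ω, X ω⟫|m] ω ∂P := (integral_condExp hm).symm
    _ = ∫ _, (0 : ℝ) ∂P := integral_congr_ae <| hpull.trans <| hf_cond.mono fun ω h => by simp [h]
    _ = 0 := integral_zero Ω ℝ

theorem integral_inner_pair_eq_zero_of_condExp_eq_zero [CompleteSpace E] (hm : m ≤ m0)
    [SigmaFinite (P.trim hm)] {f X Z : Ω → E} (hf : Integrable f P)
    (hf_cond : P[f|m] =ᵐ[P] 0) (hX : StronglyMeasurable[m] X) (hZ : StronglyMeasurable[m] Z)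
    (hfX : Integrable (fun ω => ⟪f ω, X ω⟫) P) (hfZ : Integrable (fun ω => ⟪f ω, Z ω⟫) P) :
    ∫ ω, ((⟪f ω, X ω⟫, ⟪f ω, Z ω⟫) : ℝ × ℝ) ∂P = 0 := by
  rw [integral_pair hfX hfZ, integral_inner_eq_zero_of_condExp_eq_zero hm hf hf_cond hX hfX,
    integral_inner_eq_zero_of_condExp_eq_zero hm hf hf_cond hZ hfZ, Prod.mk_zero_zero]

variable [NormedAddCommGroup F] [NormedSpace ℝ F] [CompleteSpace F]

theorem condExp_ae_eq_zero_of_le {m₁ m₂ : MeasurableSpace Ω} (hm₁₂ : m₁ ≤ m₂) (hm₂ : m₂ ≤ m0)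
    [SigmaFinite (P.trim hm₂)] {f : Ω → F} (hf : P[f|m₂] =ᵐ[P] 0) : P[f|m₁] =ᵐ[P] 0 :=
  (condExp_condExp_of_le hm₁₂ hm₂).symm.trans <| (condExp_congr_ae hf).trans <| by
    rw [condExp_zero]

theorem sub_condExp_sub_comp_sub_condExp_ae_eq (hm : m ≤ m0) [SigmaFinite (P.trim hm)]
    (K : F →L[ℝ] F) {T g ε Y : Ω → F} (hT : Integrable T P) (hg : StronglyMeasurable[m] g)
    (hg_int : Integrable g P) (hε : Integrable ε P) (hε_cond : P[ε|m] =ᵐ[P] 0)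
    (hY : Y = K ∘ T + g + ε) :
    Y - P[Y|m] - K ∘ (T - P[T|m]) =ᵐ[P] ε := by
  have hKT : Integrable (K ∘ T) P := K.integrable_comp hT
  have hY_cond : P[Y|m] =ᵐ[P] K ∘ P[T|m] + g := by
    calc P[Y|m] =ᵐ[P] P[K ∘ T|m] + P[g|m] + P[ε|m] := by
          rw [hY]
          exact (condExp_add (hKT.add hg_int) hε m).trans
            ((condExp_add hKT hg_int m).add .rfl)
      _ =ᵐ[P] K ∘ P[T|m] + g + 0 := by
          rw [condExp_of_stronglyMeasurable hm hg hg_int]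
          exact ((K.comp_condExp_comm hT).symm.add .rfl).add hε_cond
      _ = K ∘ P[T|m] + g := add_zero _
  filter_upwards [hY_cond] with ω hω
  rw [Pi.sub_apply, Pi.sub_apply, hω, hY]
  simp only [Pi.add_apply, Function.comp_apply, Pi.sub_apply, map_sub]
  abel

end

theorem moment_condition_at_truth_general
    {Ω : Type*} {ℱ : MeasurableSpace Ω} {P : Measure Ω} [IsProbabilityMeasure P]
    {n : ℕ} (A : Matrix (Fin n) (Fin n) ℝ)
    (𝒢 ℋ : MeasurableSpace Ω) (h𝒢ℋ : 𝒢 ≤ ℋ) (hℋℱ : ℋ ≤ ℱ)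
    (T g εY Y : Ω → EuclideanSpace ℝ (Fin n)) (θ₀ α₀ : ℝ)
    (hT_meas : StronglyMeasurable[ℋ] T) (hT_int : Integrable T P)
    (hg_meas : StronglyMeasurable[𝒢] g) (hg_int : Integrable g P)
    (hεY_cond : P[εY|ℋ] =ᵐ[P] 0)
    (hY : Y = θ₀ • T + α₀ • (fun ω => mulVecE A (T ω)) + g + εY)
    (hεY_sq : MemLp εY 2 P)
    (hεT_sq : MemLp (T - P[T|𝒢]) 2 P) :
    (∫ ω, ⟪εY ω, (T - P[T|𝒢]) ω⟫ ∂P = 0) ∧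
    (∫ ω, ⟪εY ω, mulVecE A ((T - P[T|𝒢]) ω)⟫ ∂P = 0) ∧
    (∫ ω,
        ((⟪(Y - P[Y|𝒢] - θ₀ • (T - P[T|𝒢])
              - α₀ • (fun ω' => mulVecE A ((T - P[T|𝒢]) ω'))) ω, (T - P[T|𝒢]) ω⟫,
          ⟪(Y - P[Y|𝒢] - θ₀ • (T - P[T|𝒢])
              - α₀ • (fun ω' => mulVecE A ((T - P[T|𝒢]) ω'))) ω,
            mulVecE A ((T - P[T|𝒢]) ω)⟫) : ℝ × ℝ) ∂P = (0, 0)) := by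
  let L := Matrix.toEuclideanCLM (𝕜 := ℝ) A
  have hL : ∀ v, L v = mulVecE A v := fun _ => rfl
  let K := θ₀ • ContinuousLinearMap.id ℝ _ + α₀ • L
  have hεY_int : Integrable εY P := hεY_sq.integrable one_le_two
  have hεT_meas : StronglyMeasurable[ℋ] (T - P[T|𝒢]) :=
    hT_meas.sub (stronglyMeasurable_condExp.mono h𝒢ℋ)
  have hAεT_meas : StronglyMeasurable[ℋ] (fun ω => mulVecE A ((T - P[T|𝒢]) ω)) :=
    L.continuous.comp_stronglyMeasurable hεT_meas
  have hi₁ : Integrable (fun ω => ⟪εY ω, (T - P[T|𝒢]) ω⟫) P :=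
    hεY_sq.integrable_inner hεT_sq
  have hi₂ : Integrable (fun ω => ⟪εY ω, mulVecE A ((T - P[T|𝒢]) ω)⟫) P :=
    hεY_sq.integrable_inner (L.comp_memLp' hεT_sq)
  have h₁ := integral_inner_eq_zero_of_condExp_eq_zero hℋℱ hεY_int hεY_cond hεT_meas hi₁
  have h₂ := integral_inner_eq_zero_of_condExp_eq_zero hℋℱ hεY_int hεY_cond hAεT_meas hi₂
  have hYK : Y = K ∘ T + g + εY := by
    ext ω : 1
    simp [hY, K, hL]
  have hR : Y - P[Y|𝒢] - θ₀ • (T - P[T|𝒢]) - α₀ • (fun ω' => mulVecE A ((T - P[T|𝒢]) ω'))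
      =ᵐ[P] εY := by
    convert sub_condExp_sub_comp_sub_condExp_ae_eq (h𝒢ℋ.trans hℋℱ) K hT_int hg_meas hg_int
      hεY_int (condExp_ae_eq_zero_of_le h𝒢ℋ hℋℱ hεY_cond) hYK using 1
    ext ω : 1
    simp [K, hL, sub_sub, add_assoc]
  refine ⟨h₁, h₂, ?_⟩
  rw [integral_congr_ae (hR.mono fun ω h => by rw [h])]
  exact integral_inner_pair_eq_zero_of_condExp_eq_zero hℋℱ hεY_int hεY_cond hεT_meas hAεT_meas
    hi₁ hi₂

/-- In the partially linear network model, with `ε^Y`, `ε^T = T − E[T ∣ 𝒢]`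
and `A.mulVec ∘ ε^T` square-integrable, the moment condition at the true parameters holds:
`E[⟨ε^Y, ε^T⟩] = 0`, `E[⟨ε^Y, A.mulVec ∘ ε^T⟩] = 0`, and hence
`E[ψ(θ₀, α₀, m₀, ℓ₀)] = (0, 0)` for the Neyman score `ψ`. -/
theorem moment_condition_at_truth
    {Ω : Type*} {ℱ : MeasurableSpace Ω} {P : Measure Ω} [IsProbabilityMeasure P]
    {n : ℕ} (A : Matrix (Fin n) (Fin n) ℝ)
    (𝒢 ℋ : MeasurableSpace Ω) (h𝒢ℋ : 𝒢 ≤ ℋ) (hℋℱ : ℋ ≤ ℱ)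
    (T g εY Y : Ω → EuclideanSpace ℝ (Fin n)) (θ₀ α₀ : ℝ)
    (hT_meas : StronglyMeasurable[ℋ] T) (hT_int : Integrable T P)
    (hg_meas : StronglyMeasurable[𝒢] g) (hg_int : Integrable g P)
    (hεY_int : Integrable εY P)
    (hεY_cond : P[εY|ℋ] =ᵐ[P] 0)
    (hY : Y = θ₀ • T + α₀ • (fun ω => mulVecE A (T ω)) + g + εY)
    (hεY_sq : MemLp εY 2 P)
    (hεT_sq : MemLp (T - P[T|𝒢]) 2 P)
    (hAεT_sq : MemLp (fun ω => mulVecE A ((T - P[T|𝒢]) ω)) 2 P) :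
    (∫ ω, ⟪εY ω, (T - P[T|𝒢]) ω⟫ ∂P = 0) ∧
    (∫ ω, ⟪εY ω, mulVecE A ((T - P[T|𝒢]) ω)⟫ ∂P = 0) ∧
    (∫ ω,
        ((⟪(Y - P[Y|𝒢] - θ₀ • (T - P[T|𝒢])
              - α₀ • (fun ω' => mulVecE A ((T - P[T|𝒢]) ω'))) ω, (T - P[T|𝒢]) ω⟫,
          ⟪(Y - P[Y|𝒢] - θ₀ • (T - P[T|𝒢])
              - α₀ • (fun ω' => mulVecE A ((T - P[T|𝒢]) ω'))) ω,
            mulVecE A ((T - P[T|𝒢]) ω)⟫) : ℝ × ℝ) ∂P = (0, 0)) :=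
  moment_condition_at_truth_general A 𝒢 ℋ h𝒢ℋ hℋℱ T g εY Y θ₀ α₀ hT_meas hT_int hg_meas hg_int
    hεY_cond hY hεY_sq hεT_sq
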